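/- arXiv:2508.21645 — 2 statements merged into one kernel-verified Lean document; each statement's English description precedes it below -/
import Mathlib

section
/- Let R ≥ 1, 0 < C < 1, and l = log(R)/log(1/C). Let N ≥ 1 be an integer and let (a_j)_{j=0}^{N-1} be real numbers with |a_j| ≤ R for all j. Suppose S ⊆ {0,…,N-1} is a set of indices with |a_j| < C for all j ∉ S, and suppose the cardinality of S is at most ⌊Np⌋ for some real 0 ≤ p < 1/(2(l+1)). Then ∏_{j=0}^{N-1} |a_j| < C^{N/2}. -/
/-!
Split the product into the factors indexed by `S`, each at most `R`, and the remaining `N - k`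
factors, each below `C`, where `k = #S`. Since `R = C ^ (-l)`, the product is at most
`C ^ (N - k - l k)`, and `k ≤ N p < N / (2 (l + 1))` says exactly that this exponent exceeds `N / 2`.
-/

open Finset

theorem Finset.prod_le_pow_card_mul_pow_card {ι R : Type*} [CommSemiring R] [PartialOrder R]
    [IsOrderedRing R] [DecidableEq ι] {s t : Finset ι} (hst : s ⊆ t) {f : ι → R}
    (hf : ∀ i ∈ t, 0 ≤ f i) {a b : R} (ha : ∀ i ∈ s, f i ≤ a) (hb : ∀ i ∈ t \ s, f i ≤ b) :
    ∏ i ∈ t, f i ≤ a ^ #s * b ^ #(t \ s) := by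
  have hfs : ∀ i ∈ s, 0 ≤ f i := fun i hi => hf i (hst hi)
  rw [← prod_sdiff hst, mul_comm, ← prod_const, ← prod_const]
  exact mul_le_mul (prod_le_prod hfs ha)
    (prod_le_prod (fun i hi => hf i (sdiff_subset hi)) hb)
    (prod_nonneg fun i hi => hf i (sdiff_subset hi))
    (prod_nonneg fun i hi => (hfs i hi).trans (ha i hi))

namespace Real

theorem pow_mul_pow_eq_rpow_sub_logb {R C : ℝ} (hR : 0 < R) (hC0 : 0 < C) (hC1 : C < 1)
    (k m : ℕ) : R ^ k * C ^ m = C ^ ((m : ℝ) - logb (1 / C) R * k) := by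
  have hR_eq : R = C ^ (-logb (1 / C) R) := by
    rw [rpow_neg hC0.le, ← inv_rpow hC0.le, ← one_div,
      rpow_logb (by positivity) (by rw [ne_eq, one_div, inv_eq_one]; exact hC1.ne) hR]
  conv_lhs => rw [hR_eq, ← rpow_mul_natCast hC0.le, ← rpow_add_natCast hC0.ne']
  ring_nf

theorem pow_mul_pow_lt_rpow_half {R C : ℝ} (hR : 0 < R) (hC0 : 0 < C) (hC1 : C < 1)
    {k m : ℕ} (hk : (k : ℝ) * (logb (1 / C) R + 1) < ((k + m : ℕ) : ℝ) / 2) :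
    R ^ k * C ^ m < C ^ (((k + m : ℕ) : ℝ) / 2) := by
  rw [pow_mul_pow_eq_rpow_sub_logb hR hC0 hC1]
  apply rpow_lt_rpow_of_exponent_gt hC0 hC1
  push_cast at hk ⊢
  linarith

end Real

theorem stmt1_general (R C l : ℝ) (hR : 1 ≤ R) (hC0 : 0 < C) (hC1 : C < 1)
    (hl : l = Real.log R / Real.log (1 / C))
    (N : ℕ) (hN : 1 ≤ N) (a : ℕ → ℝ)
    (ha : ∀ j < N, |a j| ≤ R)
    (S : Finset ℕ) (hSsub : S ⊆ Finset.range N)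
    (haS : ∀ j < N, j ∉ S → |a j| < C)
    (p : ℝ) (hp : p < 1 / (2 * (l + 1)))
    (hcard : (S.card : ℤ) ≤ ⌊(N : ℝ) * p⌋) :
    ∏ j ∈ Finset.range N, |a j| < C ^ ((N : ℝ) / 2) := by
  have hl1 : 0 < l + 1 := by
    have : 0 ≤ l := hl ▸ div_nonneg (Real.log_nonneg hR)
      (Real.log_nonneg (one_le_one_div hC0 hC1.le))
    linarith
  have hSN : (#S : ℝ) ≤ N * p := le_trans (by exact_mod_cast hcard) (Int.floor_le _)
  have hN_eq : #S + #(range N \ S) = N := by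
    rw [add_comm, card_sdiff_add_card_eq_card hSsub, card_range]
  have hk : (#S : ℝ) * (Real.logb (1 / C) R + 1) < ((#S + #(range N \ S) : ℕ) : ℝ) / 2 := by
    have hNpos : (0 : ℝ) < N := by exact_mod_cast hN
    have hp' : p * (2 * (l + 1)) < 1 := (lt_div_iff₀ (by positivity)).mp hp
    rw [hN_eq, Real.logb, ← hl]
    nlinarith
  calc ∏ j ∈ range N, |a j|
      ≤ R ^ #S * C ^ #(range N \ S) :=
        prod_le_pow_card_mul_pow_card hSsub (fun _ _ => abs_nonneg _)
          (fun j hj => ha j (mem_range.mp (hSsub hj)))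
          (fun j hj => by
            rw [mem_sdiff, mem_range] at hj
            exact (haS j hj.1 hj.2).le)
    _ < C ^ (((#S + #(range N \ S) : ℕ) : ℝ) / 2) :=
        Real.pow_mul_pow_lt_rpow_half (by linarith) hC0 hC1 hk
    _ = C ^ ((N : ℝ) / 2) := by rw [hN_eq]

/-- Counting lemma: if at most `⌊N p⌋` of the factors are merely bounded by `R` and all the
others are `< C`, with `p < 1/(2(l+1))` and `l = log R / log (1/C)`, then the product of the
absolute values is `< C^(N/2)`. -/
theorem stmt1 (R C l : ℝ) (hR : 1 ≤ R) (hC0 : 0 < C) (hC1 : C < 1)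
    (hl : l = Real.log R / Real.log (1 / C))
    (N : ℕ) (hN : 1 ≤ N) (a : ℕ → ℝ)
    (ha : ∀ j < N, |a j| ≤ R)
    (S : Finset ℕ) (hSsub : S ⊆ Finset.range N)
    (haS : ∀ j < N, j ∉ S → |a j| < C)
    (p : ℝ) (hp0 : 0 ≤ p) (hp : p < 1 / (2 * (l + 1)))
    (hcard : (S.card : ℤ) ≤ ⌊(N : ℝ) * p⌋) :
    ∏ j ∈ Finset.range N, |a j| < C ^ ((N : ℝ) / 2) :=
  stmt1_general R C l hR hC0 hC1 hl N hN a ha S hSsub haS p hp hcard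
end

section
/- Let b ≥ 2 and q be integers with 2q/b < 1/(2(l+1)) for some real l ≥ 0, let R ≥ 1 and 0 < C < 1 with l = log R / log(1/C). Suppose (a_j)_{j≥0} is a sequence of reals with |a_j| ≤ R for all j, and suppose there exists N₀ such that for all N ≥ N₀ the number of indices j ∈ {0,…,N−1} with |a_j| ≥ C is at most ⌊2(q/b)N⌋. Then limsup_{N→∞} (1/N) ∑_{j=0}^{N−1} log|a_j| ≤ (log C)/2 < 0. -/
/-!
Every term `log |a_j|` is at most `log C`, except on the indices with `|a_j| ≥ C`, where it is
at most `log R`, i.e. larger by `log R - log C = (l + 1) log (1/C)`. Those indices have density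
at most `2q/b < 1/(2(l+1))`, so they raise the average by less than `log (1/C) / 2`.
-/

open Finset Real Filter

theorem sum_log_abs_le {ι : Type*} (s : Finset ι) (a : ι → ℝ) {C R : ℝ}
    (ha0 : ∀ j ∈ s, a j ≠ 0) (haR : ∀ j ∈ s, |a j| ≤ R) :
    ∑ j ∈ s, log |a j| ≤ #s * log C + #{j ∈ s | C ≤ |a j|} * (log R - log C) := by
  calc ∑ j ∈ s, log |a j|
      ≤ ∑ j ∈ s, (log C + if C ≤ |a j| then log R - log C else 0) := by
        refine sum_le_sum fun j hj => ?_
        have hpos : 0 < |a j| := abs_pos.2 (ha0 j hj)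
        split_ifs with hbig
        · linarith [log_le_log hpos (haR j hj)]
        · linarith [log_le_log hpos (not_le.1 hbig).le]
    _ = #s * log C + #{j ∈ s | C ≤ |a j|} * (log R - log C) := by
        rw [sum_add_distrib, sum_const, nsmul_eq_mul, sum_ite, sum_const, sum_const_zero,
          nsmul_eq_mul, add_zero]

theorem sum_log_abs_le_of_card_le {ι : Type*} (s : Finset ι) (a : ι → ℝ) {C R θ : ℝ}
    (hC : 0 < C) (hCR : C ≤ R) (ha0 : ∀ j ∈ s, a j ≠ 0) (haR : ∀ j ∈ s, |a j| ≤ R)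
    (hcard : (#{j ∈ s | C ≤ |a j|} : ℝ) ≤ θ * #s) :
    ∑ j ∈ s, log |a j| ≤ #s * (log C + θ * (log R - log C)) := by
  have hgap : 0 ≤ log R - log C := sub_nonneg.2 (log_le_log hC hCR)
  calc ∑ j ∈ s, log |a j|
      ≤ #s * log C + #{j ∈ s | C ≤ |a j|} * (log R - log C) := sum_log_abs_le s a ha0 haR
    _ ≤ #s * log C + θ * #s * (log R - log C) := by gcongr
    _ = #s * (log C + θ * (log R - log C)) := by ring

theorem mul_log_sub_log_le_neg_log_div_two {θ l R C : ℝ} (hl : 0 ≤ l) (hC0 : 0 < C)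
    (hC1 : C < 1) (hlRC : l = log R / log (1 / C)) (hθ : θ < 1 / (2 * (l + 1))) :
    θ * (log R - log C) ≤ -log C / 2 := by
  have hL : 0 < log (1 / C) := log_pos (one_lt_one_div hC0 hC1)
  have hlogC : log C = -log (1 / C) := by rw [one_div, log_inv, neg_neg]
  have hgap : log R - log C = (l + 1) * log (1 / C) := by
    rw [hlRC, div_add_one hL.ne', div_mul_cancel₀ _ hL.ne', hlogC]
    ring
  have hθ' : θ * (2 * (l + 1)) < 1 := (lt_div_iff₀ (by positivity)).1 hθ
  rw [hgap, hlogC]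
  nlinarith [mul_lt_mul_of_pos_right hθ' hL]

theorem stmt17_general (b q : ℕ) (l R C : ℝ) (hl : 0 ≤ l)
    (hR : 1 ≤ R) (hC0 : 0 < C) (hC1 : C < 1)
    (hlRC : l = Real.log R / Real.log (1 / C))
    (hq : 2 * (q : ℝ) / b < 1 / (2 * (l + 1)))
    (a : ℕ → ℝ) (ha0 : ∀ j, a j ≠ 0) (haR : ∀ j, |a j| ≤ R)
    (N0 : ℕ)
    (hN0 : ∀ N, N0 ≤ N →
      ((Finset.range N).filter (fun j => C ≤ |a j|)).card ≤ ⌊2 * ((q : ℝ) / b) * N⌋₊) :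
    Filter.limsup
        (fun N : ℕ => ((1 / (N : ℝ)) * ∑ j ∈ Finset.range N, Real.log |a j| : EReal))
        Filter.atTop ≤ ((Real.log C / 2 : ℝ) : EReal) ∧
      Real.log C / 2 < 0 := by
  have hlogC : log C < 0 := log_neg hC0 hC1
  refine ⟨?_, by linarith⟩
  have hθ : 2 * ((q : ℝ) / b) * (log R - log C) ≤ -log C / 2 :=
    mul_log_sub_log_le_neg_log_div_two hl hC0 hC1 hlRC (by rwa [← mul_div_assoc])
  refine limsup_le_of_le (by isBoundedDefault) ?_
  filter_upwards [eventually_ge_atTop (max N0 1)] with N hN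
  have hNpos : (0 : ℝ) < N := by exact_mod_cast le_of_max_le_right hN
  have hcard : (#{j ∈ range N | C ≤ |a j|} : ℝ) ≤ 2 * ((q : ℝ) / b) * #(range N) := by
    rw [card_range]
    exact (Nat.cast_le.2 (hN0 N (le_of_max_le_left hN))).trans (Nat.floor_le (by positivity))
  have hsum := sum_log_abs_le_of_card_le (range N) a hC0 (by linarith)
    (fun j _ => ha0 j) (fun j _ => haR j) hcard
  rw [card_range] at hsum
  have hcoe : (1 / ((N : ℝ) : EReal)) * ((∑ j ∈ range N, log |a j| : ℝ) : EReal)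
      = ((1 / (N : ℝ) * ∑ j ∈ range N, log |a j| : ℝ) : EReal) := by norm_cast
  rw [hcoe, EReal.coe_le_coe_iff, one_div, inv_mul_le_iff₀ hNpos]
  exact hsum.trans (mul_le_mul_of_nonneg_left (by linarith) hNpos.le)

/-- If `|a_j| ≤ R` for all `j`, eventually at most `⌊2(q/b)N⌋` of the first `N` terms have
`|a_j| ≥ C`, and `2q/b < 1/(2(l+1))` with `l = log R / log(1/C)`, then the fibered Lyapunov
exponent `limsup (1/N) ∑ log |a_j|` is at most `(log C)/2 < 0`. -/
theorem stmt17 (b q : ℕ) (hb : 2 ≤ b) (l R C : ℝ) (hl : 0 ≤ l)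
    (hR : 1 ≤ R) (hC0 : 0 < C) (hC1 : C < 1)
    (hlRC : l = Real.log R / Real.log (1 / C))
    (hq : 2 * (q : ℝ) / b < 1 / (2 * (l + 1)))
    (a : ℕ → ℝ) (ha0 : ∀ j, a j ≠ 0) (haR : ∀ j, |a j| ≤ R)
    (N0 : ℕ)
    (hN0 : ∀ N, N0 ≤ N →
      ((Finset.range N).filter (fun j => C ≤ |a j|)).card ≤ ⌊2 * ((q : ℝ) / b) * N⌋₊) :
    Filter.limsup
        (fun N : ℕ => ((1 / (N : ℝ)) * ∑ j ∈ Finset.range N, Real.log |a j| : EReal))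
        Filter.atTop ≤ ((Real.log C / 2 : ℝ) : EReal) ∧
      Real.log C / 2 < 0 :=
  stmt17_general b q l R C hl hR hC0 hC1 hlRC hq a ha0 haR N0 hN0
end
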